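/- Let n ≥ 1, d ≥ 2, and let x : Fin (n(d−1) + 1) → ℂ be injective. For each l, define ψ_l ∈ EuclideanSpace ℂ (Fin n → Fin d) by ψ_l i = (x l) ^ (∑ j, (i j : ℕ)); each ψ_l is fully product (ψ_l i = ∏ j, (x l)^{(i j : ℕ)}). Then the span of {ψ_l : l : Fin (n(d−1)+1)} equals the span of the states {G_n^k : 0 ≤ k ≤ n(d−1)}. -/

import Mathlib

/-- The unnormalized `n`-qudit state `G_n^k`, the uniform superposition of all basis
vectors `|i₁⋯iₙ⟩` with `i₁ + ⋯ + iₙ = k`. -/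
noncomputable def gState (n d k : ℕ) : EuclideanSpace ℂ (Fin n → Fin d) :=
  WithLp.toLp 2 (fun i => if (∑ j, ((i j : ℕ))) = k then 1 else 0)

/-!
Grouping basis vectors by their digit sum gives `ψ_l = ∑_k (x l)^k • G_n^k`. The coefficient
matrix is the Vandermonde matrix of `x`, invertible because `x` is injective, so the two families
are related by an invertible change of coefficients and span the same subspace.
-/

open Finset Submodule

theorem sum_val_le_mul_pred {n d : ℕ} (i : Fin n → Fin d) : ∑ j, (i j : ℕ) ≤ n * (d - 1) :=
  calc ∑ j, (i j : ℕ) ≤ ∑ _j : Fin n, (d - 1) :=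
        sum_le_sum fun j _ => Nat.le_sub_one_of_lt (i j).isLt
    _ = n * (d - 1) := by simp

theorem eq_sum_pow_smul_gState {n d : ℕ} (z : ℂ) (ψ : EuclideanSpace ℂ (Fin n → Fin d))
    (hψ : ∀ i, ψ i = z ^ (∑ j, (i j : ℕ))) :
    ψ = ∑ k : Fin (n * (d - 1) + 1), z ^ (k : ℕ) • gState n d k := by
  ext i
  have hi : ∑ j, (i j : ℕ) < n * (d - 1) + 1 := Nat.lt_succ_of_le (sum_val_le_mul_pred i)
  rw [hψ, WithLp.ofLp_sum, Finset.sum_apply,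
    sum_eq_single_of_mem (⟨_, hi⟩ : Fin (n * (d - 1) + 1)) (mem_univ _)]
  · simp [gState]
  · intro k _ hk
    simp [gState, Ne.symm (Fin.val_ne_of_ne hk)]

theorem span_range_le_of_eq_sum_smul {R M ι κ : Type*} [Semiring R] [AddCommMonoid M]
    [Module R M] [Fintype κ] {v : ι → M} {w : κ → M} (c : ι → κ → R)
    (h : ∀ l, v l = ∑ k, c l k • w k) : span R (Set.range v) ≤ span R (Set.range w) :=
  span_le.mpr <| Set.range_subset_iff.mpr fun l => h l ▸
    sum_mem fun k _ => smul_mem _ _ (subset_span ⟨k, rfl⟩)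

theorem span_range_eq_of_eq_sum_smul {R M ι : Type*} [CommRing R] [AddCommGroup M] [Module R M]
    [Fintype ι] [DecidableEq ι] {v w : ι → M} (A : Matrix ι ι R) (hA : IsUnit A.det)
    (h : ∀ l, v l = ∑ k, A l k • w k) : span R (Set.range v) = span R (Set.range w) := by
  refine le_antisymm (span_range_le_of_eq_sum_smul A h)
    (span_range_le_of_eq_sum_smul (A⁻¹ : Matrix ι ι R) fun k => ?_)
  simp_rw [h, smul_sum, smul_smul]
  rw [sum_comm]
  simp_rw [← sum_smul, ← Matrix.mul_apply, Matrix.nonsing_inv_mul A hA, Matrix.one_apply,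
    ite_smul, one_smul, zero_smul, sum_ite_eq]
  simp

theorem setOf_exists_le_eq_range_fin {α : Type*} (g : ℕ → α) (N : ℕ) :
    {v | ∃ k ≤ N, v = g k} = Set.range fun k : Fin (N + 1) => g k := by
  ext v
  constructor
  · rintro ⟨k, hk, rfl⟩
    exact ⟨⟨k, Nat.lt_succ_of_le hk⟩, rfl⟩
  · rintro ⟨k, rfl⟩
    exact ⟨k, Fin.is_le k, rfl⟩

theorem span_nUPB_eq_span_gState_general (n d : ℕ)
    (x : Fin (n * (d - 1) + 1) → ℂ) (hx : Function.Injective x)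
    (ψ : Fin (n * (d - 1) + 1) → EuclideanSpace ℂ (Fin n → Fin d))
    (hψ : ∀ l i, ψ l i = (x l) ^ (∑ j, ((i j : ℕ)))) :
    (∀ l i, ψ l i = ∏ j, (x l) ^ ((i j : ℕ))) ∧
    Submodule.span ℂ (Set.range ψ) =
      Submodule.span ℂ {v | ∃ k ≤ n * (d - 1), v = gState n d k} := by
  refine ⟨fun l i => by rw [hψ, prod_pow_eq_pow_sum], ?_⟩
  rw [setOf_exists_le_eq_range_fin]
  exact span_range_eq_of_eq_sum_smul (Matrix.vandermonde x)
    (isUnit_iff_ne_zero.mpr (Matrix.det_vandermonde_ne_zero_iff.mpr hx))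
    fun l => eq_sum_pow_smul_gState (x l) (ψ l) (hψ l)

/-- For injective `x : Fin (n(d−1)+1) → ℂ`, the fully product vectors
`ψ_l i = (x l) ^ (∑ j, i j)` span the same subspace as the states `G_n^k`,
`0 ≤ k ≤ n(d−1)`. -/
theorem span_nUPB_eq_span_gState (n d : ℕ) (hn : 1 ≤ n) (hd : 2 ≤ d)
    (x : Fin (n * (d - 1) + 1) → ℂ) (hx : Function.Injective x)
    (ψ : Fin (n * (d - 1) + 1) → EuclideanSpace ℂ (Fin n → Fin d))
    (hψ : ∀ l i, ψ l i = (x l) ^ (∑ j, ((i j : ℕ)))) :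
    (∀ l i, ψ l i = ∏ j, (x l) ^ ((i j : ℕ))) ∧
    Submodule.span ℂ (Set.range ψ) =
      Submodule.span ℂ {v | ∃ k ≤ n * (d - 1), v = gState n d k} :=
  span_nUPB_eq_span_gState_general n d x hx ψ hψ
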